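/- Fix an integer N ≥ 2 and a real p₁ with 0 < p₁ < 1, and let p be the probability vector on Fin 2 with p 0 = p₁ and p 1 = 1 - p₁. For an integer c ≥ 2, let R(p,c) = 1 - (N/(2·(N-1))) · VI₂(p, u_c) denote the Rand index between the ground truth and a statistically independent balanced candidate partition with c clusters, where u_c is the uniform probability vector on Fin c. Then: (1) if p₁ = 1/2, then R(p,·) is constant in c; (2) if p₁ ≠ 1/2, then R(p,·) is strictly decreasing in c. -/
import Mathlib


/-- The quadratic entropy of a finitely supported probability vector. -/
noncomputable def quadEntropy {α : Type*} [Fintype α] (x : α → ℝ) : ℝ :=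
  2 * (1 - ∑ i, (x i) ^ 2)

/-- The quadratic variation of information between (the distributions of)
two statistically independent partitions. -/
noncomputable def VI2 {α β : Type*} [Fintype α] [Fintype β] (p : α → ℝ) (q : β → ℝ) : ℝ :=
  2 * quadEntropy (fun ij : α × β => p ij.1 * q ij.2) - quadEntropy p - quadEntropy q

/-- The uniform (balanced) probability vector on `Fin c`. -/
noncomputable def unif (c : ℕ) : Fin c → ℝ := fun _ => 1 / (c : ℝ)

/-- The (expected) Rand index between a ground-truth distribution `p` and a
statistically independent balanced candidate partition with `c` clusters. -/
noncomputable def randGT (N : ℕ) {r : ℕ} (p : Fin r → ℝ) (c : ℕ) : ℝ :=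
  1 - ((N : ℝ) / (2 * ((N : ℝ) - 1))) * VI2 p (unif c)


lemma VI2_eq_aux (p : Fin 2 → ℝ) (c : ℕ) (hc : (c : ℝ) ≠ 0) :
    VI2 p (unif c) = 2 * (p 0 ^ 2 + p 1 ^ 2) + (2 - 4 * (p 0 ^ 2 + p 1 ^ 2)) / c := by
  unfold VI2 quadEntropy unif
  rw [Fintype.sum_prod_type]
  simp only [Fin.sum_univ_two, Finset.sum_const, Finset.card_univ, Fintype.card_fin,
    nsmul_eq_mul, mul_pow]
  field_simp
  ring

lemma randGT_eq_aux (N : ℕ) (p : Fin 2 → ℝ) (c : ℕ) (hc : (c : ℝ) ≠ 0) :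
    randGT N p c = 1 - ((N : ℝ) / (2 * ((N : ℝ) - 1))) *
      (2 * (p 0 ^ 2 + p 1 ^ 2) + (2 - 4 * (p 0 ^ 2 + p 1 ^ 2)) / c) := by
  rw [randGT, VI2_eq_aux p c hc]

theorem randGT_bias_skewed_two_clusters {N : ℕ} (hN : 2 ≤ N)
    (p₁ : ℝ) (hp₁ : 0 < p₁) (hp₁' : p₁ < 1)
    (p : Fin 2 → ℝ) (hp0 : p 0 = p₁) (hp1 : p 1 = 1 - p₁) :
    (p₁ = 1 / 2 →
      ∀ c c' : ℕ, 2 ≤ c → 2 ≤ c' → randGT N p c = randGT N p c') ∧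
    (p₁ ≠ 1 / 2 →
      ∀ c c' : ℕ, 2 ≤ c → c < c' → randGT N p c' < randGT N p c) := by
  have hNr : (2 : ℝ) ≤ N := by exact_mod_cast hN
  constructor
  · intro h c c' hc hc'
    have hc0 : (c : ℝ) ≠ 0 := by positivity
    have hc'0 : (c' : ℝ) ≠ 0 := by positivity
    rw [randGT_eq_aux N p c hc0, randGT_eq_aux N p c' hc'0, hp0, hp1, h]
    norm_num
  · intro h c c' hc hcc'
    have hc0 : (0 : ℝ) < c := by exact_mod_cast Nat.lt_of_lt_of_le (by norm_num) hc
    have hc'0 : (0 : ℝ) < c' := by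
      exact_mod_cast Nat.lt_of_lt_of_le (by norm_num) (le_of_lt (Nat.lt_of_le_of_lt hc hcc'))
    have hlt : (c : ℝ) < c' := by exact_mod_cast hcc'
    rw [randGT_eq_aux N p c (ne_of_gt hc0), randGT_eq_aux N p c' (ne_of_gt hc'0), hp0, hp1]
    have hK : (0 : ℝ) < (N : ℝ) / (2 * ((N : ℝ) - 1)) := by
      apply div_pos (by linarith) (by linarith)
    have h' : p₁ - 1/2 ≠ 0 := sub_ne_zero.mpr h
    have hsq : (0 : ℝ) < (p₁ - 1/2)^2 := by positivity
    have hD : (2 - 4 * (p₁ ^ 2 + (1 - p₁) ^ 2)) < 0 := by nlinarith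
    have key : (2 - 4 * (p₁ ^ 2 + (1 - p₁) ^ 2)) / c < (2 - 4 * (p₁ ^ 2 + (1 - p₁) ^ 2)) / c' := by
      rw [div_lt_div_iff₀ hc0 hc'0]
      exact mul_lt_mul_of_neg_left hlt hD
    nlinarith [mul_lt_mul_of_pos_left key hK]
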